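/- Let f₀ ∈ X be positive and nonzero, let w̲ be the minimum of the entries w^(l)_σ over all l ∈ {1,…,M⁻} and all σ with F_σ(f₀) > 0, let w̄ be the maximum of all entries w^(l)_σ, and let 0 < r < (w̲ / (2 w̄)) F(f₀). Then there exists a constant C > 0, depending only on the weight vectors w^(l) and not on f₀, such that for all f, g in the ball of radius r around f₀ in X, every l ∈ {1,…,M⁻}, and every k ∈ {1,…,M}: |W^(l)_k(f) − W^(l)_k(g)| ≤ (C / F(f₀)²) ‖f − g‖. -/

import Mathlib

open MeasureTheory Filter

namespace GBN

structure Params (M : ℕ) where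
  hM : 0 < M
  Mm : ℕ
  M0 : ℕ
  Mp : ℕ
  hsum : Mm + M0 + Mp = M
  v : Fin M → ℝ
  hvneg : ∀ σ : Fin M, (σ : ℕ) < Mm → v σ < 0
  hvzero : ∀ σ : Fin M, Mm ≤ (σ : ℕ) → (σ : ℕ) < Mm + M0 → v σ = 0
  hvpos : ∀ σ : Fin M, Mm + M0 ≤ (σ : ℕ) → 0 < v σ
  Kb : Fin M → ℕ
  hKb : ∀ l : Fin M, (l : ℕ) < Mm → 0 < Kb l
  Jb : Fin M → Fin M → Fin M → ℕ
  hJbdiag : ∀ l σ, Jb l σ σ = 0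
  hJbrow : ∀ l : Fin M, (l : ℕ) < Mm → ∀ s : Fin M, (∑ σ : Fin M, Jb l s σ) = Kb l
  wb : Fin M → Fin M → ℝ
  hwb : ∀ l : Fin M, (l : ℕ) < Mm → ∀ σ : Fin M, 0 < wb l σ
  Kint : ℕ
  hKint : 0 < Kint
  Jint : Fin M → Fin M → ℕ
  hJintdiag : ∀ σ, Jint σ σ = 0
  hJintrow : ∀ s : Fin M, (∑ σ : Fin M, Jint s σ) = Kint
  wint : Fin M → ℝ
  hwint : ∀ σ, 0 < wint σ
  beta : ℝ
  hbeta : 0 ≤ beta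

variable {M : ℕ}

/-- The set of species that can undergo boundary events. -/
def bSet (P : Params M) : Finset (Fin M) := Finset.univ.filter fun l => (l : ℕ) < P.Mm

/-- Positivity of an element of X. -/
def Positive (f : Fin M → ℝ → ℝ) : Prop := ∀ σ : Fin M, ∀ x : ℝ, 0 ≤ x → 0 ≤ f σ x

/-- Nonvanishing of an element of X. -/
def Nonzero (f : Fin M → ℝ → ℝ) : Prop := ∃ σ : Fin M, ∃ x : ℝ, 0 ≤ x ∧ f σ x ≠ 0

/-- Membership in the Banach space X of continuous, integrable (and bounded) functions. -/
def MemX (f : Fin M → ℝ → ℝ) : Prop :=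
  (∀ σ, ContinuousOn (f σ) (Set.Ici 0)) ∧
  (∀ σ, IntegrableOn (f σ) (Set.Ici 0)) ∧
  (∀ σ, BddAbove ((fun x => |f σ x|) '' Set.Ici 0))

noncomputable def normL1 (f : Fin M → ℝ → ℝ) : ℝ :=
  ∑ σ : Fin M, ∫ x in Set.Ici (0:ℝ), |f σ x|

noncomputable def normLinf (f : Fin M → ℝ → ℝ) : ℝ :=
  ∑ σ : Fin M, sSup ((fun x => |f σ x|) '' Set.Ici 0)

/-- The norm of X. -/
noncomputable def normX (f : Fin M → ℝ → ℝ) : ℝ := normL1 f + normLinf f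

/-- Pointwise difference. -/
def subf (f g : Fin M → ℝ → ℝ) : Fin M → ℝ → ℝ := fun σ x => f σ x - g σ x

/-- The total number of particles of species σ. -/
noncomputable def Fc (f : Fin M → ℝ → ℝ) (σ : Fin M) : ℝ := ∫ x in Set.Ici (0:ℝ), f σ x

/-- The total number of particles. -/
noncomputable def Ft (f : Fin M → ℝ → ℝ) : ℝ := ∑ σ : Fin M, Fc f σ

/-- The weighted fraction W_σ for a weight vector w. -/
noncomputable def Wgt (w : Fin M → ℝ) (f : Fin M → ℝ → ℝ) (σ : Fin M) : ℝ :=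
  w σ / ∑ n : Fin M, w n * Fc f n

/-- The weighted fraction γ. -/
noncomputable def gam (P : Params M) (f : Fin M → ℝ → ℝ) : ℝ :=
  Ft f / ∑ n : Fin M, P.wint n * Fc f n

/-- The boundary flux rate L̇_l = -v_l f_l(0). -/
noncomputable def Ldot (P : Params M) (f : Fin M → ℝ → ℝ) (l : Fin M) : ℝ := -(P.v l) * f l 0

/-- The flux j(f). -/
noncomputable def flux (P : Params M) (f : Fin M → ℝ → ℝ) (σ : Fin M) (x : ℝ) : ℝ :=
  (∑ s : Fin M, ((∑ l ∈ bSet P, Ldot P f l * (P.Jb l s σ : ℝ) * Wgt (P.wb l) f s)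
      + P.beta * gam P f * (P.Jint s σ : ℝ) * P.wint s) * f s x)
  - ((∑ l ∈ bSet P, Ldot P f l * (P.Kb l : ℝ) * Wgt (P.wb l) f σ)
      + P.beta * gam P f * (P.Kint : ℝ) * P.wint σ) * f σ x

/-- Extension by zero to negative arguments. -/
noncomputable def ext (g : ℝ → ℝ) (x : ℝ) : ℝ := if 0 ≤ x then g x else 0

/-- Continuity in time of a curve with values in X, i.e. membership in C([0,T];X). -/
def ContinuousInX (T : ℝ) (u : ℝ → Fin M → ℝ → ℝ) : Prop :=
  ∀ t ∈ Set.Icc (0:ℝ) T, ∀ ε > (0:ℝ), ∃ δ > (0:ℝ), ∀ s ∈ Set.Icc (0:ℝ) T,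
    |s - t| < δ → normX (subf (u s) (u t)) < ε

/-- A mild solution of the kinetic equations on [0,T]. -/
def MildSolution (P : Params M) (T : ℝ) (u : ℝ → Fin M → ℝ → ℝ) : Prop :=
  (∀ t ∈ Set.Icc (0:ℝ) T, MemX (u t)) ∧
  ContinuousInX T u ∧
  ∀ σ : Fin M, ∀ x : ℝ, 0 ≤ x → ∀ t ∈ Set.Icc (0:ℝ) T,
    u t σ x = ext (u 0 σ) (x - P.v σ * t)
      + ∫ τ in (0:ℝ)..t, ext (flux P (u τ) σ) (x - P.v σ * (t - τ))

/-- Positivity of a curve on [0,T]. -/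
def PositiveOn (T : ℝ) (u : ℝ → Fin M → ℝ → ℝ) : Prop :=
  ∀ t ∈ Set.Icc (0:ℝ) T, Positive (u t)

/-- u is the unique maximal positive mild solution with initial datum f₀,
defined on [0, Tstar). -/
def IsMaximalSolution (P : Params M) (f₀ : Fin M → ℝ → ℝ)
    (Tstar : ENNReal) (u : ℝ → Fin M → ℝ → ℝ) : Prop :=
  0 < Tstar ∧
  (∀ σ : Fin M, ∀ x : ℝ, 0 ≤ x → u 0 σ x = f₀ σ x) ∧
  (∀ T : ℝ, 0 < T → ENNReal.ofReal T < Tstar → MildSolution P T u ∧ PositiveOn T u) ∧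
  (∀ T : ℝ, 0 < T → ∀ g : ℝ → Fin M → ℝ → ℝ,
      MildSolution P T g → PositiveOn T g → (∀ σ : Fin M, ∀ x : ℝ, 0 ≤ x → g 0 σ x = f₀ σ x) →
      ENNReal.ofReal T < Tstar ∧
        ∀ t ∈ Set.Icc (0:ℝ) T, ∀ σ : Fin M, ∀ x : ℝ, 0 ≤ x → g t σ x = u t σ x)

end GBN

namespace GBN

/-- The minimum of the boundary weight entries w^(l)_σ over species σ with F_σ(f₀) > 0. -/
noncomputable def wlowB {M : ℕ} (P : Params M) (f₀ : Fin M → ℝ → ℝ) : ℝ :=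
  sInf {x : ℝ | ∃ l ∈ bSet P, ∃ σ : Fin M, 0 < Fc f₀ σ ∧ x = P.wb l σ}

/-- The maximum of all boundary weight entries w^(l)_σ. -/
noncomputable def wbarB {M : ℕ} (P : Params M) : ℝ :=
  sSup {x : ℝ | ∃ l ∈ bSet P, ∃ σ : Fin M, x = P.wb l σ}

/-!
The denominator `D(f) = ∑ₙ wₙ Fₙ(f)` of a weight is Lipschitz in `f` with constant `w̄`, since
`|Fₙ(f) - Fₙ(g)| ≤ ‖fₙ - gₙ‖_{L¹}`. At `f₀` it is at least `w̲ F(f₀)`, because only species with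
`Fₙ(f₀) > 0` contribute, so on the ball of radius `r < w̲ F(f₀) / (2 w̄)` it stays above
`w̲ F(f₀) / 2`. Writing `W_k(f) - W_k(g) = w_k (D(g) - D(f)) / (D(f) D(g))` then gives the estimate
with `C = 4 w̄² / w_min²`, where `w_min ≤ w̲` is the smallest of all weight entries.
-/

lemma abs_div_sub_div_le {a b c q : ℝ} (hq : 0 < q) (ha : q ≤ a) (hb : q ≤ b) :
    |c / a - c / b| ≤ |c| * |a - b| / q ^ 2 := by
  have ha₀ : 0 < a := hq.trans_le ha
  have hb₀ : 0 < b := hq.trans_le hb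
  have hdiff : c / a - c / b = c * (b - a) / (a * b) := by field_simp
  rw [hdiff, abs_div, abs_mul, abs_of_pos (mul_pos ha₀ hb₀), abs_sub_comm b a]
  exact div_le_div_of_nonneg_left (by positivity) (by positivity)
    (by rw [sq]; exact mul_le_mul ha hb hq.le ha₀.le)

section NormX

variable {M : ℕ}

lemma Fc_nonneg {f : Fin M → ℝ → ℝ} (hf : Positive f) (σ : Fin M) : 0 ≤ Fc f σ :=
  setIntegral_nonneg measurableSet_Ici fun x hx => hf σ x hx

lemma abs_Fc_sub_Fc_le {f g : Fin M → ℝ → ℝ} (hf : MemX f) (hg : MemX g) (σ : Fin M) :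
    |Fc f σ - Fc g σ| ≤ ∫ x in Set.Ici (0:ℝ), |f σ x - g σ x| := by
  rw [Fc, Fc, ← integral_sub (hf.2.1 σ) (hg.2.1 σ)]
  exact abs_integral_le_integral_abs

lemma normL1_nonneg (f : Fin M → ℝ → ℝ) : 0 ≤ normL1 f :=
  Finset.sum_nonneg fun _ _ => integral_nonneg fun _ => abs_nonneg _

lemma normLinf_nonneg {f : Fin M → ℝ → ℝ}
    (hf : ∀ σ, BddAbove ((fun x => |f σ x|) '' Set.Ici 0)) : 0 ≤ normLinf f :=
  Finset.sum_nonneg fun σ _ =>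
    (abs_nonneg (f σ 0)).trans (le_csSup (hf σ) ⟨0, Set.self_mem_Ici, rfl⟩)

lemma MemX.bddAbove_abs_subf {f g : Fin M → ℝ → ℝ} (hf : MemX f) (hg : MemX g) (σ : Fin M) :
    BddAbove ((fun x => |subf f g σ x|) '' Set.Ici 0) := by
  obtain ⟨a, ha⟩ := hf.2.2 σ
  obtain ⟨b, hb⟩ := hg.2.2 σ
  refine ⟨a + b, ?_⟩
  rintro _ ⟨x, hx, rfl⟩
  exact (abs_sub _ _).trans (add_le_add (ha ⟨x, hx, rfl⟩) (hb ⟨x, hx, rfl⟩))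

lemma normL1_subf_le_normX {f g : Fin M → ℝ → ℝ} (hf : MemX f) (hg : MemX g) :
    normL1 (subf f g) ≤ normX (subf f g) :=
  le_add_of_nonneg_right (normLinf_nonneg (hf.bddAbove_abs_subf hg))

lemma normX_subf_nonneg {f g : Fin M → ℝ → ℝ} (hf : MemX f) (hg : MemX g) :
    0 ≤ normX (subf f g) :=
  (normL1_nonneg _).trans (normL1_subf_le_normX hf hg)

end NormX

section WeightedMass

variable {M : ℕ}

noncomputable def weightedMass (w : Fin M → ℝ) (f : Fin M → ℝ → ℝ) : ℝ :=
  ∑ n : Fin M, w n * Fc f n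

lemma abs_weightedMass_sub_le {w : Fin M → ℝ} {B : ℝ} (hw : ∀ n, |w n| ≤ B)
    {f g : Fin M → ℝ → ℝ} (hf : MemX f) (hg : MemX g) :
    |weightedMass w f - weightedMass w g| ≤ B * normL1 (subf f g) := by
  calc |weightedMass w f - weightedMass w g|
      = |∑ n, w n * (Fc f n - Fc g n)| := by
        simp only [weightedMass, mul_sub, Finset.sum_sub_distrib]
    _ ≤ ∑ n, |w n| * |Fc f n - Fc g n| := by
        simpa only [abs_mul] using
          Finset.abs_sum_le_sum_abs (fun n => w n * (Fc f n - Fc g n)) Finset.univ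
    _ ≤ ∑ n, B * ∫ x in Set.Ici (0:ℝ), |f n x - g n x| :=
        Finset.sum_le_sum fun n _ =>
          mul_le_mul (hw n) (abs_Fc_sub_Fc_le hf hg n) (abs_nonneg _) ((abs_nonneg _).trans (hw n))
    _ = B * normL1 (subf f g) := by rw [normL1, Finset.mul_sum]; rfl

lemma mul_Ft_le_weightedMass {w : Fin M → ℝ} {c : ℝ} {f₀ : Fin M → ℝ → ℝ} (hf₀ : Positive f₀)
    (hc : ∀ n, 0 < Fc f₀ n → c ≤ w n) : c * Ft f₀ ≤ weightedMass w f₀ := by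
  rw [Ft, Finset.mul_sum]
  refine Finset.sum_le_sum fun n _ => ?_
  rcases (Fc_nonneg hf₀ n).eq_or_lt with h | h
  · simp [← h]
  · exact mul_le_mul_of_nonneg_right (hc n h) h.le

variable {w : Fin M → ℝ} {B c r : ℝ} {f₀ : Fin M → ℝ → ℝ}

lemma half_le_weightedMass (hB : 0 ≤ B) (hw : ∀ n, |w n| ≤ B) (hc : ∀ n, 0 < Fc f₀ n → c ≤ w n)
    (hr : 2 * B * r ≤ c * Ft f₀) (hf₀ : MemX f₀) (hf₀pos : Positive f₀)
    {f : Fin M → ℝ → ℝ} (hf : MemX f) (hfr : normX (subf f f₀) < r) :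
    c * Ft f₀ / 2 ≤ weightedMass w f := by
  have hlip := (abs_le.mp (abs_weightedMass_sub_le hw hf hf₀)).1
  have hnear : B * normL1 (subf f f₀) ≤ B * r :=
    mul_le_mul_of_nonneg_left ((normL1_subf_le_normX hf hf₀).trans hfr.le) hB
  linarith [mul_Ft_le_weightedMass hf₀pos hc]

lemma abs_Wgt_sub_Wgt_le (hB : 0 ≤ B) (hw : ∀ n, |w n| ≤ B)
    (hc : ∀ n, 0 < Fc f₀ n → c ≤ w n) (hcF : 0 < c * Ft f₀) (hr : 2 * B * r ≤ c * Ft f₀)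
    (hf₀ : MemX f₀) (hf₀pos : Positive f₀) {f g : Fin M → ℝ → ℝ} (hf : MemX f) (hg : MemX g)
    (hfr : normX (subf f f₀) < r) (hgr : normX (subf g f₀) < r) (k : Fin M) :
    |Wgt w f k - Wgt w g k| ≤ 4 * B ^ 2 / (c * Ft f₀) ^ 2 * normX (subf f g) := by
  have hDf := half_le_weightedMass hB hw hc hr hf₀ hf₀pos hf hfr
  have hDg := half_le_weightedMass hB hw hc hr hf₀ hf₀pos hg hgr
  have hDfg : |weightedMass w f - weightedMass w g| ≤ B * normX (subf f g) :=
    (abs_weightedMass_sub_le hw hf hg).trans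
      (mul_le_mul_of_nonneg_left (normL1_subf_le_normX hf hg) hB)
  calc |Wgt w f k - Wgt w g k|
      ≤ |w k| * |weightedMass w f - weightedMass w g| / (c * Ft f₀ / 2) ^ 2 :=
        abs_div_sub_div_le (by positivity) hDf hDg
    _ ≤ B * (B * normX (subf f g)) / (c * Ft f₀ / 2) ^ 2 := by
        gcongr
        exact hw k
    _ = 4 * B ^ 2 / (c * Ft f₀) ^ 2 * normX (subf f g) := by ring

end WeightedMass

section BoundaryWeights

variable {M : ℕ} (P : Params M)

noncomputable def boundaryWeights : Finset ℝ :=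
  (bSet P ×ˢ Finset.univ).image fun p => P.wb p.1 p.2

lemma coe_boundaryWeights :
    (boundaryWeights P : Set ℝ) = {x : ℝ | ∃ l ∈ bSet P, ∃ σ : Fin M, x = P.wb l σ} := by
  ext x
  simp [boundaryWeights, eq_comm]

variable {P}

lemma wb_mem_boundaryWeights {l : Fin M} (hl : l ∈ bSet P) (σ : Fin M) :
    P.wb l σ ∈ boundaryWeights P := by
  rw [← Finset.mem_coe, coe_boundaryWeights]
  exact ⟨l, hl, σ, rfl⟩

lemma pos_of_mem_boundaryWeights {x : ℝ} (hx : x ∈ boundaryWeights P) : 0 < x := by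
  rw [← Finset.mem_coe, coe_boundaryWeights] at hx
  obtain ⟨l, hl, σ, rfl⟩ := hx
  exact P.hwb l (Finset.mem_filter.mp hl).2 σ

lemma abs_wb_le_max' (h : (boundaryWeights P).Nonempty) {l : Fin M} (hl : l ∈ bSet P)
    (σ : Fin M) : |P.wb l σ| ≤ (boundaryWeights P).max' h := by
  have hmem := wb_mem_boundaryWeights hl σ
  rw [abs_of_pos (pos_of_mem_boundaryWeights hmem)]
  exact (boundaryWeights P).le_max' _ hmem

lemma wbarB_eq_max' (h : (boundaryWeights P).Nonempty) : wbarB P = (boundaryWeights P).max' h := by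
  rw [wbarB, ← coe_boundaryWeights]
  exact h.csSup_eq_max'

lemma wlowB_le_wb {f₀ : Fin M → ℝ → ℝ} {l σ : Fin M} (hl : l ∈ bSet P) (hσ : 0 < Fc f₀ σ) :
    wlowB P f₀ ≤ P.wb l σ :=
  csInf_le ((boundaryWeights P).bddBelow.mono fun _ ⟨_, hl', σ', _, hx⟩ =>
    hx ▸ wb_mem_boundaryWeights hl' σ') ⟨l, hl, σ, hσ, rfl⟩

/-- The infimum of a nonempty finite set is attained; that of `∅` is the junk value `0`. -/
lemma wlowB_eq_zero_or_mem (f₀ : Fin M → ℝ → ℝ) :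
    wlowB P f₀ = 0 ∨ wlowB P f₀ ∈ boundaryWeights P := by
  set T := {x : ℝ | ∃ l ∈ bSet P, ∃ σ : Fin M, 0 < Fc f₀ σ ∧ x = P.wb l σ}
  have hT : T ⊆ boundaryWeights P := fun _ ⟨l, hl, σ, _, hx⟩ =>
    hx ▸ wb_mem_boundaryWeights hl σ
  rcases T.eq_empty_or_nonempty with hempty | hne
  · left
    rw [show wlowB P f₀ = sInf T from rfl, hempty, Real.sInf_empty]
  · exact .inr (hT (hne.csInf_mem ((boundaryWeights P).finite_toSet.subset hT)))

end BoundaryWeights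

/-- Lipschitz estimate for the weights (estimate (B.24)): there exists C > 0 depending
only on the weight vectors such that for all f, g in the ball of radius
r < (w̲/(2w̄)) F(f₀) around f₀, |W^(l)_k(f) − W^(l)_k(g)| ≤ (C/F(f₀)²) ‖f − g‖. -/
theorem weightLipschitz (M : ℕ) (P : Params M) :
    ∃ C > (0:ℝ), ∀ f₀ : Fin M → ℝ → ℝ, MemX f₀ → Positive f₀ → Nonzero f₀ →
      ∀ r : ℝ, 0 < r → r < wlowB P f₀ / (2 * wbarB P) * Ft f₀ →
        ∀ f g : Fin M → ℝ → ℝ, MemX f → MemX g →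
          normX (subf f f₀) < r → normX (subf g f₀) < r →
          ∀ l ∈ bSet P, ∀ k : Fin M,
            |Wgt (P.wb l) f k - Wgt (P.wb l) g k| ≤ C / (Ft f₀)^2 * normX (subf f g) := by
  rcases (boundaryWeights P).eq_empty_or_nonempty with hS | hS
  · refine ⟨1, one_pos, fun _ _ _ _ _ _ _ _ _ _ _ _ _ l hl _ => ?_⟩
    simpa [hS] using wb_mem_boundaryWeights hl l
  set wmin := (boundaryWeights P).min' hS
  set wmax := (boundaryWeights P).max' hS
  have hwmin : 0 < wmin := pos_of_mem_boundaryWeights ((boundaryWeights P).min'_mem hS)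
  have hwmax : 0 < wmax := pos_of_mem_boundaryWeights ((boundaryWeights P).max'_mem hS)
  refine ⟨4 * wmax ^ 2 / wmin ^ 2, by positivity, ?_⟩
  intro f₀ hf₀ hf₀pos _ r hr hrF f g hf hg hfr hgr l hl k
  rw [wbarB_eq_max' hS] at hrF
  have hlow : wlowB P f₀ ∈ boundaryWeights P := (wlowB_eq_zero_or_mem f₀).resolve_left
    fun h => by simp only [h, zero_div, zero_mul] at hrF; linarith
  have hwlow : 0 < wlowB P f₀ := pos_of_mem_boundaryWeights hlow
  have hrF' : 2 * wmax * r < wlowB P f₀ * Ft f₀ := by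
    rw [div_mul_eq_mul_div, lt_div_iff₀ (mul_pos two_pos hwmax)] at hrF
    linarith
  have hF : 0 < Ft f₀ := pos_of_mul_pos_right
    ((mul_pos (mul_pos two_pos hwmax) hr).trans hrF') hwlow.le
  calc |Wgt (P.wb l) f k - Wgt (P.wb l) g k|
      ≤ 4 * wmax ^ 2 / (wlowB P f₀ * Ft f₀) ^ 2 * normX (subf f g) :=
        abs_Wgt_sub_Wgt_le hwmax.le (abs_wb_le_max' hS hl) (fun _ => wlowB_le_wb hl)
          (mul_pos hwlow hF) hrF'.le hf₀ hf₀pos hf hg hfr hgr k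
    _ ≤ 4 * wmax ^ 2 / wmin ^ 2 / Ft f₀ ^ 2 * normX (subf f g) := by
        rw [div_div, ← mul_pow]
        gcongr
        · exact normX_subf_nonneg hf hg
        · exact (boundaryWeights P).min'_le _ hlow

end GBN
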